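/- (Transversality.) Assume (H0) and d₁, d₂, l > 0, let k be a natural number at which hypothesis (H3) holds: B_k − C_k > 0, −A_k² + 2·B_k + b₁₁² > 0 and (A_k² − 2·B_k − b₁₁²)² > 4·(B_k² − C_k²), and let j be a natural number. Suppose λ : ℝ → ℂ is differentiable at τ₀ := τ_k^{j+} (resp. τ₀ := τ_k^{j−}), satisfies λ(τ₀) = i·ω_k⁺ (resp. λ(τ₀) = i·ω_k⁻), and satisfies λ(τ)² + A_k·λ(τ) + B_k + (−b₁₁·λ(τ) + C_k)·exp(−λ(τ)·τ) = 0 for all τ in some open neighborhood of τ₀. Then the derivative λ′(τ₀) has strictly positive real part (resp. strictly negative real part). -/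

import Mathlib

open Real

/-- Δ = M² − 4·K·(a·m + c·p)·(a·r₂ + c·d − c·r₀) with M = a·m + c·p + K·(a·r₂ + c·d). -/
noncomputable def Delta (r₀ r₂ K d a p c m : ℝ) : ℝ :=
  (a*m + c*p + K*(a*r₂ + c*d))^2 - 4*K*(a*m + c*p)*(a*r₂ + c*d - c*r₀)

/-- The positive equilibrium predator density v⋆. -/
noncomputable def vstar (r₀ r₂ K d a p c m : ℝ) : ℝ :=
  (-(a*m + c*p + K*(a*r₂ + c*d)) + Real.sqrt (Delta r₀ r₂ K d a p c m)) / (2*K*(a*m + c*p))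

/-- The positive equilibrium prey density u⋆ = (r₂ + m·v⋆)/c. -/
noncomputable def ustar (r₀ r₂ K d a p c m : ℝ) : ℝ := (r₂ + m * vstar r₀ r₂ K d a p c m) / c

/-- Linearization coefficient a₁₂. -/
noncomputable def a12 (r₀ r₂ K d a p c m : ℝ) : ℝ :=
  -K*r₀*ustar r₀ r₂ K d a p c m / (1 + K*vstar r₀ r₂ K d a p c m)^2 - p*ustar r₀ r₂ K d a p c m

/-- Linearization coefficient a₂₁. -/
noncomputable def a21 (r₀ r₂ K d a p c m : ℝ) : ℝ := c * vstar r₀ r₂ K d a p c m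

/-- Linearization coefficient a₂₂. -/
noncomputable def a22 (r₀ r₂ K d a p c m : ℝ) : ℝ := -m * vstar r₀ r₂ K d a p c m

/-- Linearization coefficient b₁₁. -/
noncomputable def b11 (r₀ r₂ K d a p c m : ℝ) : ℝ := -a * ustar r₀ r₂ K d a p c m

/-- A_k = (d₁ + d₂)·k²/l² − a₂₂. -/
noncomputable def Ak (r₀ r₂ K d a p c m d₁ d₂ l : ℝ) (k : ℕ) : ℝ :=
  (d₁ + d₂)*(k:ℝ)^2/l^2 - a22 r₀ r₂ K d a p c m

/-- B_k = d₁·d₂·k⁴/l⁴ − a₂₂·d₁·k²/l² − a₁₂·a₂₁. -/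
noncomputable def Bk (r₀ r₂ K d a p c m d₁ d₂ l : ℝ) (k : ℕ) : ℝ :=
  d₁*d₂*(k:ℝ)^4/l^4 - a22 r₀ r₂ K d a p c m * d₁*(k:ℝ)^2/l^2 - a12 r₀ r₂ K d a p c m * a21 r₀ r₂ K d a p c m

/-- C_k = −b₁₁·d₂·k²/l² + a₂₂·b₁₁. -/
noncomputable def Ck (r₀ r₂ K d a p c m d₁ d₂ l : ℝ) (k : ℕ) : ℝ :=
  -(b11 r₀ r₂ K d a p c m)*d₂*(k:ℝ)^2/l^2 + a22 r₀ r₂ K d a p c m * b11 r₀ r₂ K d a p c m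

/-- The characteristic equation at mode k with delay τ:
λ² + A_k·λ + B_k + (−b₁₁·λ + C_k)·exp(−λτ) = 0. -/
def charEq (r₀ r₂ K d a p c m d₁ d₂ l : ℝ) (k : ℕ) (τ : ℝ) (z : ℂ) : Prop :=
  z^2 + (Ak r₀ r₂ K d a p c m d₁ d₂ l k : ℂ)*z + (Bk r₀ r₂ K d a p c m d₁ d₂ l k : ℂ)
    + (-(b11 r₀ r₂ K d a p c m : ℂ)*z + (Ck r₀ r₂ K d a p c m d₁ d₂ l k : ℂ)) * Complex.exp (-z*(τ:ℂ)) = 0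

/-- Ĉ_k(ω) = (d₁·b₁₁·ω²·k²/l² − B_k·C_k)/(b₁₁²·ω² + C_k²). -/
noncomputable def Chat (r₀ r₂ K d a p c m d₁ d₂ l : ℝ) (k : ℕ) (ω : ℝ) : ℝ :=
  (d₁ * b11 r₀ r₂ K d a p c m * ω^2 * (k:ℝ)^2/l^2 - Bk r₀ r₂ K d a p c m d₁ d₂ l k * Ck r₀ r₂ K d a p c m d₁ d₂ l k) /
    ((b11 r₀ r₂ K d a p c m)^2*ω^2 + (Ck r₀ r₂ K d a p c m d₁ d₂ l k)^2)

/-- S_k(ω) = (A_k·C_k·ω + B_k·b₁₁·ω − b₁₁·ω³)/(b₁₁²·ω² + C_k²). -/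
noncomputable def Sk (r₀ r₂ K d a p c m d₁ d₂ l : ℝ) (k : ℕ) (ω : ℝ) : ℝ :=
  (Ak r₀ r₂ K d a p c m d₁ d₂ l k * Ck r₀ r₂ K d a p c m d₁ d₂ l k * ω + Bk r₀ r₂ K d a p c m d₁ d₂ l k * b11 r₀ r₂ K d a p c m * ω - b11 r₀ r₂ K d a p c m * ω^3) /
    ((b11 r₀ r₂ K d a p c m)^2*ω^2 + (Ck r₀ r₂ K d a p c m d₁ d₂ l k)^2)

/-- ω_k⁺. -/
noncomputable def omegaP (r₀ r₂ K d a p c m d₁ d₂ l : ℝ) (k : ℕ) : ℝ :=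
  Real.sqrt ((-(Ak r₀ r₂ K d a p c m d₁ d₂ l k)^2 + 2*Bk r₀ r₂ K d a p c m d₁ d₂ l k + (b11 r₀ r₂ K d a p c m)^2
    + Real.sqrt (((Ak r₀ r₂ K d a p c m d₁ d₂ l k)^2 - 2*Bk r₀ r₂ K d a p c m d₁ d₂ l k - (b11 r₀ r₂ K d a p c m)^2)^2
      - 4*((Bk r₀ r₂ K d a p c m d₁ d₂ l k)^2 - (Ck r₀ r₂ K d a p c m d₁ d₂ l k)^2))) / 2)

/-- ω_k⁻. -/
noncomputable def omegaM (r₀ r₂ K d a p c m d₁ d₂ l : ℝ) (k : ℕ) : ℝ :=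
  Real.sqrt ((-(Ak r₀ r₂ K d a p c m d₁ d₂ l k)^2 + 2*Bk r₀ r₂ K d a p c m d₁ d₂ l k + (b11 r₀ r₂ K d a p c m)^2
    - Real.sqrt (((Ak r₀ r₂ K d a p c m d₁ d₂ l k)^2 - 2*Bk r₀ r₂ K d a p c m d₁ d₂ l k - (b11 r₀ r₂ K d a p c m)^2)^2
      - 4*((Bk r₀ r₂ K d a p c m d₁ d₂ l k)^2 - (Ck r₀ r₂ K d a p c m d₁ d₂ l k)^2))) / 2)

/-- τ_k^(j+) = (π − arcsin S_k(ω_k⁺) + 2jπ)/ω_k⁺. -/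
noncomputable def tauP (r₀ r₂ K d a p c m d₁ d₂ l : ℝ) (k j : ℕ) : ℝ :=
  (Real.pi - Real.arcsin (Sk r₀ r₂ K d a p c m d₁ d₂ l k (omegaP r₀ r₂ K d a p c m d₁ d₂ l k)) + 2*(j:ℝ)*Real.pi) / omegaP r₀ r₂ K d a p c m d₁ d₂ l k

/-- τ_k^(j−) = (π − arcsin S_k(ω_k⁻) + 2jπ)/ω_k⁻. -/
noncomputable def tauM (r₀ r₂ K d a p c m d₁ d₂ l : ℝ) (k j : ℕ) : ℝ :=
  (Real.pi - Real.arcsin (Sk r₀ r₂ K d a p c m d₁ d₂ l k (omegaM r₀ r₂ K d a p c m d₁ d₂ l k)) + 2*(j:ℝ)*Real.pi) / omegaM r₀ r₂ K d a p c m d₁ d₂ l k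

/-- Hypothesis (H3) at mode k. -/
def H3 (r₀ r₂ K d a p c m d₁ d₂ l : ℝ) (k : ℕ) : Prop :=
  Bk r₀ r₂ K d a p c m d₁ d₂ l k - Ck r₀ r₂ K d a p c m d₁ d₂ l k > 0 ∧ -(Ak r₀ r₂ K d a p c m d₁ d₂ l k)^2 + 2*Bk r₀ r₂ K d a p c m d₁ d₂ l k + (b11 r₀ r₂ K d a p c m)^2 > 0 ∧
    ((Ak r₀ r₂ K d a p c m d₁ d₂ l k)^2 - 2*Bk r₀ r₂ K d a p c m d₁ d₂ l k - (b11 r₀ r₂ K d a p c m)^2)^2 > 4*((Bk r₀ r₂ K d a p c m d₁ d₂ l k)^2 - (Ck r₀ r₂ K d a p c m d₁ d₂ l k)^2)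

/-!
Differentiating the characteristic equation `λ² + Aλ + B + (C - bλ)e^{-λτ} = 0` along the root
branch at a crossing `λ(τ₀) = iω` gives `λ'·Q = iω·(C - ibω)E` with `E = e^{-iωτ₀}` and
`Q = 2iω + A - bE - τ₀(C - ibω)E`. Multiplying by `conj Q` and using `|E| = 1` together with the
equation itself, `(C - ibω)E = ω² - B - iAω`, the `τ₀`-dependence becomes purely imaginary and
`Re λ' · |Q|² = ω²(2ω² + A² - 2B - b²)`. At `ω = ω_k^±` the last factor equals `±√(disc)`, nonzero
by (H3); that `ω_k^-` is nonzero needs `B_k > C_k > 0`, where `C_k > 0` comes from the signs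
`b₁₁, a₂₂ < 0` at the positive equilibrium.
-/

open Topology ComplexConjugate

noncomputable def charFun (A B C b τ : ℝ) (z : ℂ) : ℂ :=
  z ^ 2 + A * z + B + (-b * z + C) * Complex.exp (-z * τ)

theorem hasDerivAt_charFun_comp {A B C b τ₀ : ℝ} {z : ℝ → ℂ} {z' : ℂ} (hz : HasDerivAt z z' τ₀) :
    HasDerivAt (fun τ => charFun A B C b τ (z τ))
      ((2 * z τ₀ + A) * z' - b * z' * Complex.exp (-z τ₀ * τ₀)
        - (-b * z τ₀ + C) * Complex.exp (-z τ₀ * τ₀) * (z' * τ₀ + z τ₀)) τ₀ := by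
  have hexp : HasDerivAt (fun τ : ℝ => Complex.exp (-z τ * τ))
      (Complex.exp (-z τ₀ * τ₀) * (-z' * τ₀ + -z τ₀ * 1)) τ₀ :=
    (hz.neg.mul (hasDerivAt_id τ₀).ofReal_comp).cexp
  refine ((((hz.pow 2).add (hz.const_mul (A : ℂ))).add_const (B : ℂ)).add
    (((hz.const_mul (-b : ℂ)).add_const (C : ℂ)).mul hexp)).congr_deriv ?_
  push_cast
  ring

theorem charFun_implicit_deriv {A B C b τ₀ : ℝ} {z : ℝ → ℂ} {z' : ℂ} (hz : HasDerivAt z z' τ₀)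
    (hev : ∀ᶠ τ in 𝓝 τ₀, charFun A B C b τ (z τ) = 0) :
    (2 * z τ₀ + A) * z' - b * z' * Complex.exp (-z τ₀ * τ₀)
      - (-b * z τ₀ + C) * Complex.exp (-z τ₀ * τ₀) * (z' * τ₀ + z τ₀) = 0 :=
  (hasDerivAt_charFun_comp hz).unique ((hasDerivAt_const τ₀ 0).congr_of_eventuallyEq hev)

theorem re_deriv_mul_normSq_eq {A B C b ω τ₀ : ℝ} {z : ℝ → ℂ} {z' : ℂ}
    (hz : HasDerivAt z z' τ₀) (hz₀ : z τ₀ = Complex.I * ω)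
    (hev : ∀ᶠ τ in 𝓝 τ₀, charFun A B C b τ (z τ) = 0) :
    z'.re * Complex.normSq (2 * Complex.I * ω + A - b * Complex.exp (-(Complex.I * ω) * τ₀)
      - τ₀ * (C - b * Complex.I * ω) * Complex.exp (-(Complex.I * ω) * τ₀))
      = ω ^ 2 * (2 * ω ^ 2 + A ^ 2 - 2 * B - b ^ 2) := by
  set E := Complex.exp (-(Complex.I * ω) * τ₀)
  set u : ℂ := C - b * Complex.I * ω
  set Q : ℂ := 2 * Complex.I * ω + A - b * E - τ₀ * u * E
  have hE : E * conj E = 1 := by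
    rw [← Complex.exp_conj, ← Complex.exp_add]
    simp [Complex.conj_ofReal]
  have huE : u * E = ω ^ 2 - B - A * Complex.I * ω := by
    have := hev.self_of_nhds
    rw [charFun, hz₀] at this
    linear_combination this - (ω : ℂ) ^ 2 * Complex.I_sq
  have hQ : z' * Q = Complex.I * ω * (u * E) := by
    have := charFun_implicit_deriv hz hev
    rw [hz₀] at this
    linear_combination this
  have hconjQ : conj Q = -2 * Complex.I * ω + A - b * conj E - τ₀ * conj u * conj E := by
    simp [Q, u, map_ofNat]
  have hmul : z' * Complex.normSq Q = Complex.I * ω * (-2 * Complex.I * ω + A) * (u * E)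
      - Complex.I * ω * b * u * (E * conj E)
      - Complex.I * ω * τ₀ * (u * conj u) * (E * conj E) := by
    rw [← Complex.mul_conj, ← mul_assoc, hQ, hconjQ]; ring
  rw [hE, huE, Complex.mul_conj] at hmul
  calc z'.re * Complex.normSq Q = (z' * Complex.normSq Q).re := by simp
    _ = ω ^ 2 * (2 * ω ^ 2 + A ^ 2 - 2 * B - b ^ 2) := by
      rw [hmul]
      simp only [neg_mul, pow_two, mul_one, Complex.sub_re, Complex.mul_re, Complex.I_re,
        Complex.ofReal_re, zero_mul, Complex.I_im, Complex.ofReal_im, mul_zero, sub_self,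
        Complex.add_re, Complex.neg_re, Complex.re_ofNat, Complex.im_ofNat, Complex.mul_im,
        add_zero, neg_zero, zero_add, one_mul, Complex.add_im, Complex.neg_im, mul_neg,
        sub_neg_eq_add, sub_zero, Complex.sub_im, zero_sub, u]
      ring

theorem re_deriv_mul_pos_of_imaginary_root {A B C b ω τ₀ : ℝ} {z : ℝ → ℂ} {z' : ℂ} (hω : ω ≠ 0)
    (hF : 2 * ω ^ 2 + A ^ 2 - 2 * B - b ^ 2 ≠ 0) (hz : HasDerivAt z z' τ₀)
    (hz₀ : z τ₀ = Complex.I * ω) (hev : ∀ᶠ τ in 𝓝 τ₀, charFun A B C b τ (z τ) = 0) :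
    0 < z'.re * (2 * ω ^ 2 + A ^ 2 - 2 * B - b ^ 2) := by
  obtain ⟨q, hq, key⟩ : ∃ q, 0 ≤ q ∧ z'.re * q = ω ^ 2 * (2 * ω ^ 2 + A ^ 2 - 2 * B - b ^ 2) :=
    ⟨_, Complex.normSq_nonneg _, re_deriv_mul_normSq_eq hz hz₀ hev⟩
  refine pos_of_mul_pos_left ?_ hq
  calc 0 < ω ^ 2 * (2 * ω ^ 2 + A ^ 2 - 2 * B - b ^ 2) ^ 2 := by positivity
    _ = _ := by linear_combination -(2 * ω ^ 2 + A ^ 2 - 2 * B - b ^ 2) * key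

theorem omega_plus_spec {A B C b ω : ℝ} (h₂ : 0 < -A ^ 2 + 2 * B + b ^ 2)
    (h₃ : 4 * (B ^ 2 - C ^ 2) < (A ^ 2 - 2 * B - b ^ 2) ^ 2)
    (hω : ω = √((-A ^ 2 + 2 * B + b ^ 2
      + √((A ^ 2 - 2 * B - b ^ 2) ^ 2 - 4 * (B ^ 2 - C ^ 2))) / 2)) :
    ω ≠ 0 ∧ 0 < 2 * ω ^ 2 + A ^ 2 - 2 * B - b ^ 2 := by
  have hD : 0 < √((A ^ 2 - 2 * B - b ^ 2) ^ 2 - 4 * (B ^ 2 - C ^ 2)) :=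
    Real.sqrt_pos.mpr (by linarith)
  have hsq : ω ^ 2 = (-A ^ 2 + 2 * B + b ^ 2
      + √((A ^ 2 - 2 * B - b ^ 2) ^ 2 - 4 * (B ^ 2 - C ^ 2))) / 2 := by
    rw [hω, Real.sq_sqrt (by positivity)]
  refine ⟨fun h => ?_, by linarith⟩
  rw [h] at hsq
  linarith

theorem omega_minus_spec {A B C b ω : ℝ} (hC : 0 < C) (h₁ : 0 < B - C)
    (h₂ : 0 < -A ^ 2 + 2 * B + b ^ 2) (h₃ : 4 * (B ^ 2 - C ^ 2) < (A ^ 2 - 2 * B - b ^ 2) ^ 2)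
    (hω : ω = √((-A ^ 2 + 2 * B + b ^ 2
      - √((A ^ 2 - 2 * B - b ^ 2) ^ 2 - 4 * (B ^ 2 - C ^ 2))) / 2)) :
    ω ≠ 0 ∧ 2 * ω ^ 2 + A ^ 2 - 2 * B - b ^ 2 < 0 := by
  have hD : 0 < √((A ^ 2 - 2 * B - b ^ 2) ^ 2 - 4 * (B ^ 2 - C ^ 2)) :=
    Real.sqrt_pos.mpr (by linarith)
  have hlt : √((A ^ 2 - 2 * B - b ^ 2) ^ 2 - 4 * (B ^ 2 - C ^ 2)) < -A ^ 2 + 2 * B + b ^ 2 := by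
    rw [Real.sqrt_lt' h₂]
    nlinarith
  have hsq : ω ^ 2 = (-A ^ 2 + 2 * B + b ^ 2
      - √((A ^ 2 - 2 * B - b ^ 2) ^ 2 - 4 * (B ^ 2 - C ^ 2))) / 2 := by
    rw [hω, Real.sq_sqrt (by linarith)]
  refine ⟨fun h => ?_, by linarith⟩
  rw [h] at hsq
  linarith

section Equilibrium

variable {r₀ r₂ K d a p c m : ℝ}

theorem vstar_pos (hK : 0 < K) (ha : 0 < a) (hp : 0 < p) (hc : 0 < c) (hm : 0 < m)
    (hH0 : a * r₂ + c * d - c * r₀ < 0) : 0 < vstar r₀ r₂ K d a p c m := by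
  have hM : (a * m + c * p + K * (a * r₂ + c * d)) ^ 2 < Delta r₀ r₂ K d a p c m := by
    have : 0 < K * (a * m + c * p) := by positivity
    unfold Delta
    nlinarith
  unfold vstar
  exact div_pos (by linarith [Real.lt_sqrt_of_sq_lt hM]) (by positivity)

theorem ustar_pos (hr₂ : 0 < r₂) (hK : 0 < K) (ha : 0 < a) (hp : 0 < p) (hc : 0 < c) (hm : 0 < m)
    (hH0 : a * r₂ + c * d - c * r₀ < 0) : 0 < ustar r₀ r₂ K d a p c m := by
  have := vstar_pos hK ha hp hc hm hH0
  unfold ustar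
  positivity

theorem Ck_pos {d₁ d₂ l : ℝ} (k : ℕ) (hr₂ : 0 < r₂) (hK : 0 < K) (ha : 0 < a) (hp : 0 < p)
    (hc : 0 < c) (hm : 0 < m) (hd₂ : 0 < d₂) (hH0 : a * r₂ + c * d - c * r₀ < 0) :
    0 < Ck r₀ r₂ K d a p c m d₁ d₂ l k := by
  have hb : 0 < -b11 r₀ r₂ K d a p c m := by
    have := ustar_pos hr₂ hK ha hp hc hm hH0
    unfold b11; nlinarith
  have ha22 : 0 < -a22 r₀ r₂ K d a p c m := by
    have := vstar_pos hK ha hp hc hm hH0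
    unfold a22; nlinarith
  have : 0 ≤ -b11 r₀ r₂ K d a p c m * d₂ * (k : ℝ) ^ 2 / l ^ 2 := by positivity
  unfold Ck
  nlinarith

end Equilibrium

theorem stmt17_general (r₀ r₂ K d a p c m d₁ d₂ l : ℝ) (hr₂ : 0 < r₂) (hK : 0 < K) (ha : 0 < a) (hp : 0 < p) (hc : 0 < c) (hm : 0 < m)
    (hd₂ : 0 < d₂)
    (hH0 : a*r₂ + c*d - c*r₀ < 0) (k j : ℕ) (hH3 : H3 r₀ r₂ K d a p c m d₁ d₂ l k) :
    (∀ (z : ℝ → ℂ) (z' : ℂ),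
      HasDerivAt z z' (tauP r₀ r₂ K d a p c m d₁ d₂ l k j) →
      z (tauP r₀ r₂ K d a p c m d₁ d₂ l k j) = Complex.I * (omegaP r₀ r₂ K d a p c m d₁ d₂ l k : ℂ) →
      (∀ᶠ τ in nhds (tauP r₀ r₂ K d a p c m d₁ d₂ l k j), charEq r₀ r₂ K d a p c m d₁ d₂ l k τ (z τ)) →
      0 < z'.re) ∧
    (∀ (z : ℝ → ℂ) (z' : ℂ),
      HasDerivAt z z' (tauM r₀ r₂ K d a p c m d₁ d₂ l k j) →
      z (tauM r₀ r₂ K d a p c m d₁ d₂ l k j) = Complex.I * (omegaM r₀ r₂ K d a p c m d₁ d₂ l k : ℂ) →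
      (∀ᶠ τ in nhds (tauM r₀ r₂ K d a p c m d₁ d₂ l k j), charEq r₀ r₂ K d a p c m d₁ d₂ l k τ (z τ)) →
      z'.re < 0) := by
  obtain ⟨h₁, h₂, h₃⟩ := hH3
  refine ⟨fun z z' hz hz₀ hev => ?_, fun z z' hz hz₀ hev => ?_⟩
  · obtain ⟨hω, hF⟩ := omega_plus_spec h₂ h₃ rfl
    exact pos_of_mul_pos_left (re_deriv_mul_pos_of_imaginary_root hω hF.ne' hz hz₀ hev) hF.le
  · have hC := Ck_pos (d₁ := d₁) (l := l) k hr₂ hK ha hp hc hm hd₂ hH0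
    obtain ⟨hω, hF⟩ := omega_minus_spec hC h₁ h₂ h₃ rfl
    exact neg_of_mul_pos_left (re_deriv_mul_pos_of_imaginary_root hω hF.ne hz hz₀ hev) hF.le

theorem stmt17 (r₀ r₂ K d a p c m d₁ d₂ l : ℝ) (hr₀ : 0 < r₀) (hr₂ : 0 < r₂) (hK : 0 < K) (hd : 0 < d) (ha : 0 < a) (hp : 0 < p) (hc : 0 < c) (hm : 0 < m)
    (hd₁ : 0 < d₁) (hd₂ : 0 < d₂) (hl : 0 < l)
    (hH0 : a*r₂ + c*d - c*r₀ < 0) (k j : ℕ) (hH3 : H3 r₀ r₂ K d a p c m d₁ d₂ l k) :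
    (∀ (z : ℝ → ℂ) (z' : ℂ),
      HasDerivAt z z' (tauP r₀ r₂ K d a p c m d₁ d₂ l k j) →
      z (tauP r₀ r₂ K d a p c m d₁ d₂ l k j) = Complex.I * (omegaP r₀ r₂ K d a p c m d₁ d₂ l k : ℂ) →
      (∀ᶠ τ in nhds (tauP r₀ r₂ K d a p c m d₁ d₂ l k j), charEq r₀ r₂ K d a p c m d₁ d₂ l k τ (z τ)) →
      0 < z'.re) ∧
    (∀ (z : ℝ → ℂ) (z' : ℂ),
      HasDerivAt z z' (tauM r₀ r₂ K d a p c m d₁ d₂ l k j) →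
      z (tauM r₀ r₂ K d a p c m d₁ d₂ l k j) = Complex.I * (omegaM r₀ r₂ K d a p c m d₁ d₂ l k : ℂ) →
      (∀ᶠ τ in nhds (tauM r₀ r₂ K d a p c m d₁ d₂ l k j), charEq r₀ r₂ K d a p c m d₁ d₂ l k τ (z τ)) →
      z'.re < 0) :=
  stmt17_general r₀ r₂ K d a p c m d₁ d₂ l hr₂ hK ha hp hc hm hd₂ hH0 k j hH3
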